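/- arXiv:0806.2680 — 8 statements merged into one kernel-verified Lean document; each statement's English description precedes it below -/
import Mathlib

section
/- The function f : ℕ∞ → ℕ∞ defined by f(n) = n ∸ 1 (truncated subtraction, with f(∞) = ∞) is the unique continuous function (with respect to the ω-cpo structure on ℕ∞) satisfying f(n) = min(f₁(n), f₂(n)) for all n, where f₁(n) = if n < 2 then 0 else 1 + f(n − 1) and f₂(n) = if n < 1 then 0 else 2 + f(n − 1). -/
/-!
An ω-continuous function on ℕ∞ is determined by its values on ℕ, since ∞ is the supremum of
the finite numbers; `n ∸ 1` is ω-continuous as the left adjoint of `n ↦ n + 1`. On ℕ the system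
forces `f 0 = f 1 = 0`, and for `n ≥ 2` the first branch of the minimum always wins, so
`f (k + 2) = 1 + f (k + 1)`: the only solution is `n ∸ 1`.
-/

open scoped Classical

/-- Production of a finite io-word (`true` = '+' output, `false` = '−' input)
on a finite input budget. -/
def prodList : List Bool → ℕ → ℕ
  | [], _ => 0
  | true :: l, n => 1 + prodList l n
  | false :: _, 0 => 0
  | false :: l, n + 1 => prodList l n

/-- The production function ⟦σ⟧ : ℕ∞ → ℕ∞ of an io-sequence σ (a finite or
infinite word over {−,+}), obtained as the supremum over finite prefixes of σ
and finite budgets below the argument. -/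
noncomputable def prodSeq (σ : Stream'.Seq Bool) (n : ℕ∞) : ℕ∞ :=
  ⨆ (k : ℕ) (m : ℕ) (_ : (m : ℕ∞) ≤ n), (prodList (σ.take k) m : ℕ∞)

/-- ω-continuity (together with monotonicity) on the ω-cpo ℕ∞. -/
def NEContinuous (f : ℕ∞ → ℕ∞) : Prop :=
  Monotone f ∧ ∀ c : ℕ → ℕ∞, Monotone c → f (⨆ k, c k) = ⨆ k, f (c k)

/-- Rational (eventually periodic, possibly finite) io-sequences. -/
def RationalSeq (σ : Stream'.Seq Bool) : Prop :=
  (∃ l : List Bool, σ = Stream'.Seq.ofList l) ∨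
  ∃ (u v : List Bool) (h : v ≠ []),
    σ = (Stream'.Seq.ofList u).append (Stream'.Seq.ofStream (Stream'.cycle v h))

/-- Periodically increasing functions on ℕ∞: monotone, ω-continuous,
determined at ∞ by the finite values, and eventually linear-periodic. -/
def PerInc (f : ℕ∞ → ℕ∞) : Prop :=
  Monotone f ∧
  (∀ c : ℕ → ℕ∞, Monotone c → f (⨆ k, c k) = ⨆ k, f (c k)) ∧
  (f ⊤ = ⨆ n : ℕ, f n) ∧
  ∃ N p q : ℕ, 1 ≤ p ∧ ∀ n : ℕ, N ≤ n → f ((n : ℕ∞) + (p : ℕ∞)) = f n + (q : ℕ∞)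

lemma GaloisConnection.neContinuous {l u : ℕ∞ → ℕ∞} (gc : GaloisConnection l u) :
    NEContinuous l :=
  ⟨gc.monotone_l, fun _ _ => gc.l_iSup⟩

lemma NEContinuous.map_top {f : ℕ∞ → ℕ∞} (hf : NEContinuous f) : f ⊤ = ⨆ n : ℕ, f n := by
  rw [← ENat.iSup_natCast, hf.2 _ Nat.mono_cast]

lemma NEContinuous.ext_natCast {f g : ℕ∞ → ℕ∞} (hf : NEContinuous f) (hg : NEContinuous g)
    (h : ∀ n : ℕ, f n = g n) : f = g := by
  funext n
  induction n using ENat.recTopCoe with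
  | top => simp only [hf.map_top, hg.map_top, h]
  | coe n => exact h n

namespace ENat

lemma neContinuous_sub_one : NEContinuous (fun n : ℕ∞ => n - 1) :=
  GaloisConnection.neContinuous fun _ _ => tsub_le_iff_right

noncomputable def pascalStep (g : ℕ∞ → ℕ∞) (n : ℕ∞) : ℕ∞ :=
  min (if n < 2 then 0 else 1 + g (n - 1)) (if n < 1 then 0 else 2 + g (n - 1))

section pascalStep

variable (g : ℕ∞ → ℕ∞)

@[simp] lemma pascalStep_zero : pascalStep g 0 = 0 := by
  simp [pascalStep]

@[simp] lemma pascalStep_one : pascalStep g 1 = 0 := by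
  simp [pascalStep]

lemma pascalStep_of_two_le {n : ℕ∞} (hn : 2 ≤ n) : pascalStep g n = 1 + g (n - 1) := by
  have hn' : 1 ≤ n := le_trans (by norm_num) hn
  rw [pascalStep, if_neg hn.not_gt, if_neg hn'.not_gt, min_eq_left]
  gcongr
  norm_num

lemma pascalStep_natCast_add_two (k : ℕ) : pascalStep g (k + 2) = 1 + g (k + 1) := by
  rw [pascalStep_of_two_le g le_add_self]
  norm_cast

end pascalStep

lemma sub_one_eq_pascalStep (n : ℕ∞) : n - 1 = pascalStep (fun m => m - 1) n := by
  induction n using ENat.recTopCoe with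
  | top => simp [pascalStep_of_two_le]
  | coe n =>
    match n with
    | 0 => simp
    | 1 => simp
    | k + 2 =>
      rw [Nat.cast_add, Nat.cast_two, pascalStep_natCast_add_two]
      norm_cast
      omega

lemma eq_sub_one_of_eq_pascalStep {f : ℕ∞ → ℕ∞} (hf : ∀ n, f n = pascalStep f n) (n : ℕ) :
    f n = n - 1 := by
  have hsucc : ∀ k : ℕ, f (k + 1) = k := by
    intro k
    induction k with
    | zero => simpa using hf 1
    | succ k ih =>
      rw [hf, Nat.cast_succ, add_assoc, one_add_one_eq_two, pascalStep_natCast_add_two, ih,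
        add_comm]
  cases n with
  | zero => simpa using hf 0
  | succ k => rw [Nat.cast_succ, hsucc]; norm_cast

end ENat

/-- The function n ↦ n ∸ 1 is the unique ω-continuous solution of the
production equation system of the Pascal stream function. -/
theorem pascal_production_unique :
    (NEContinuous (fun n : ℕ∞ => n - 1) ∧
      ∀ n : ℕ∞,
        n - 1 =
          min (if n < 2 then 0 else 1 + ((n - 1) - 1))
              (if n < 1 then 0 else 2 + ((n - 1) - 1))) ∧
    ∀ f : ℕ∞ → ℕ∞, NEContinuous f →
      (∀ n : ℕ∞,
        f n =
          min (if n < 2 then 0 else 1 + f (n - 1))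
              (if n < 1 then 0 else 2 + f (n - 1))) →
      f = fun n : ℕ∞ => n - 1 :=
  ⟨⟨ENat.neContinuous_sub_one, ENat.sub_one_eq_pascalStep⟩, fun _ hf hfix =>
    hf.ext_natCast ENat.neContinuous_sub_one (ENat.eq_sub_one_of_eq_pascalStep hfix)⟩
end

section
/- If σ is an eventually periodic io-sequence, i.e. σ = u v v v ⋯ for finite words u, v over {−,+} with v nonempty, then its production function ⟦σ⟧ : ℕ∞ → ℕ∞ is periodically increasing: there exist natural numbers N, p, q with p computable from the number of '−' in v and q from the number of '+' in v, such that ⟦σ⟧(n + p) = ⟦σ⟧(n) + q for all n ≥ N when v contains at least one '−', and ⟦σ⟧(n) = ∞ for all n ≥ N when v contains no '−' but at least one '+'. -/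
open scoped Classical

theorem prodList_mono_budget : ∀ (l : List Bool) {m n : ℕ}, m ≤ n →
    prodList l m ≤ prodList l n
  | [], _, _, _ => le_refl _
  | true :: l, m, n, h => by
      simpa [prodList] using prodList_mono_budget l h
  | false :: l, 0, _, _ => by simp [prodList]
  | false :: l, m + 1, n + 1, h => by
      simpa [prodList] using prodList_mono_budget l (Nat.succ_le_succ_iff.mp h)

theorem prodList_le_append : ∀ (l r : List Bool) (n : ℕ),
    prodList l n ≤ prodList (l ++ r) n
  | [], _, _ => Nat.zero_le _
  | true :: l, r, n => by simpa [prodList] using prodList_le_append l r n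
  | false :: l, r, 0 => by simp [prodList]
  | false :: l, r, n + 1 => by simpa [prodList] using prodList_le_append l r n

theorem prodList_prefix {l l' : List Bool} (h : l <+: l') (n : ℕ) :
    prodList l n ≤ prodList l' n := by
  obtain ⟨r, rfl⟩ := h; exact prodList_le_append l r n

theorem prodList_append (l r : List Bool) (n : ℕ) (h : l.count false ≤ n) :
    prodList (l ++ r) n = l.count true + prodList r (n - l.count false) := by
  induction l generalizing n with
  | nil => simp [prodList]
  | cons b l ih =>
      cases b with
      | true =>
          simp only [List.count_cons] at h ⊢
          norm_num at h ⊢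
          rw [show prodList (true :: (l ++ r)) n = 1 + prodList (l ++ r) n from rfl,
            ih n (by omega)]
          omega
      | false =>
          simp only [List.count_cons] at h
          norm_num at h
          obtain ⟨m, rfl⟩ : ∃ m, n = m + 1 := ⟨n - 1, by omega⟩
          simp only [List.count_cons]
          norm_num
          rw [show prodList (false :: (l ++ r)) (m + 1) = prodList (l ++ r) m from rfl,
            ih m (by omega)]
          congr 2
          omega

theorem prodList_of_count (l : List Bool) (n : ℕ) (h : l.count false ≤ n) :
    prodList l n = l.count true := by
  have := prodList_append l [] n h
  simpa [prodList] using this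

theorem seq_take_ofStream (s : Stream' Bool) : ∀ k : ℕ,
    (Stream'.Seq.ofStream s).take k = Stream'.take k s := by
  intro k
  induction k generalizing s with
  | zero => rfl
  | succ k ih =>
      rw [← Stream'.eta s, Stream'.Seq.ofStream_cons]
      rw [Stream'.Seq.take]
      simp only [Stream'.Seq.destruct_cons]
      rw [ih, Stream'.take_succ_cons]

theorem stream_take_append (l : List Bool) (k : ℕ) (s : Stream' Bool) :
    Stream'.take (l.length + k) (l ++ₛ s) = l ++ Stream'.take k s := by
  induction l with
  | nil => simp [Stream'.nil_append_stream]
  | cons a l ih =>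
      rw [Stream'.cons_append_stream]
      simpa [Nat.succ_add] using congrArg (a :: ·) (ih)

theorem stream_take_cycle (v : List Bool) (hv : v ≠ []) (j : ℕ) :
    Stream'.take (j * v.length) (Stream'.cycle v hv) =
      (List.replicate j v).flatten := by
  induction j with
  | zero => simp [Stream'.take_zero]
  | succ j ih =>
      rw [Stream'.cycle_eq v hv]
      rw [show (j+1) * v.length = v.length + j * v.length by ring,
        stream_take_append, ih]
      simp [List.replicate_succ]

theorem stream_take_prefix (s : Stream' Bool) {a b : ℕ} (h : a ≤ b) :
    Stream'.take a s <+: Stream'.take b s := by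
  induction b with
  | zero => simp_all
  | succ b ih =>
      rcases Nat.lt_or_ge a (b + 1) with h' | h'
      · exact (ih (by omega)).trans ⟨[s.get b], (Stream'.take_succ' b).symm⟩
      · have : a = b + 1 := by omega
        subst this; exact List.prefix_refl _

/-- The key description of `prodSeq` at a finite budget. -/
theorem prodSeq_eq (u v : List Bool) (hv : v ≠ []) (n : ℕ) :
    prodSeq ((Stream'.Seq.ofList u).append
        (Stream'.Seq.ofStream (Stream'.cycle v hv))) (n : ℕ∞) =
      ⨆ j : ℕ, (prodList (u ++ (List.replicate j v).flatten) n : ℕ∞) := by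
  set s : Stream' Bool := u ++ₛ Stream'.cycle v hv with hs
  have hσ : (Stream'.Seq.ofList u).append
      (Stream'.Seq.ofStream (Stream'.cycle v hv)) = Stream'.Seq.ofStream s := by
    rw [hs, Stream'.Seq.ofStream_append]
  rw [hσ, prodSeq]
  have hvpos : 0 < v.length := List.length_pos_iff.mpr hv
  -- collapse the inner budget sup
  have step1 : ∀ k : ℕ,
      (⨆ (m : ℕ) (_ : (m : ℕ∞) ≤ (n : ℕ∞)), (prodList ((Stream'.Seq.ofStream s).take k) m : ℕ∞))
        = (prodList (Stream'.take k s) n : ℕ∞) := by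
    intro k
    rw [seq_take_ofStream]
    apply le_antisymm
    · refine iSup₂_le fun m hm => ?_
      exact_mod_cast prodList_mono_budget _ (Nat.cast_le.mp hm)
    · exact le_iSup₂_of_le n le_rfl le_rfl
  rw [iSup_congr step1]
  -- cofinality between all prefixes and the aligned prefixes
  have key : ∀ j : ℕ, Stream'.take (u.length + j * v.length) s
      = u ++ (List.replicate j v).flatten := by
    intro j
    rw [hs, stream_take_append, stream_take_cycle]
  apply le_antisymm
  · refine iSup_le fun k => ?_
    refine le_iSup_of_le k ?_
    have hk : k ≤ u.length + k * v.length := by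
      have := Nat.le_mul_of_pos_right k hvpos
      omega
    have := prodList_prefix (stream_take_prefix s hk) n
    rw [key k] at this
    exact_mod_cast this
  · refine iSup_le fun j => ?_
    refine le_iSup_of_le (u.length + j * v.length) ?_
    rw [key j]

/-- The production function of an eventually periodic io-sequence u v^ω is
periodically increasing, with period the number of '−' in v and increase the
number of '+' in v; if v contains no '−' but some '+', the production is
eventually ∞. -/
theorem prodSeq_eventually_periodic (u v : List Bool) (hv : v ≠ []) :
    ∃ N : ℕ,
      (0 < v.count false →
        ∀ n : ℕ, N ≤ n →
          prodSeq ((Stream'.Seq.ofList u).append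
              (Stream'.Seq.ofStream (Stream'.cycle v hv)))
            ((n : ℕ∞) + (v.count false : ℕ∞)) =
          prodSeq ((Stream'.Seq.ofList u).append
              (Stream'.Seq.ofStream (Stream'.cycle v hv)))
            (n : ℕ∞) + (v.count true : ℕ∞)) ∧
      (v.count false = 0 → 0 < v.count true →
        ∀ n : ℕ, N ≤ n →
          prodSeq ((Stream'.Seq.ofList u).append
              (Stream'.Seq.ofStream (Stream'.cycle v hv)))
            (n : ℕ∞) = ⊤) := by
  classical
  set d := v.count false with hd
  set t := v.count true with ht
  set uf := u.count false with huf
  refine ⟨uf, ?_, ?_⟩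
  · -- periodic case
    intro hdpos n hn
    rw [show (n : ℕ∞) + (d : ℕ∞) = ((n + d : ℕ) : ℕ∞) by push_cast; ring]
    rw [prodSeq_eq u v hv, prodSeq_eq u v hv]
    -- counts of replicated blocks
    have hcount : ∀ (j : ℕ) (b : Bool),
        ((List.replicate j v).flatten).count b = j * v.count b := by
      intro j b
      induction j with
      | zero => simp
      | succ j ih => simp [List.replicate_succ, ih]; ring
    have hF : ∀ j, prodList (u ++ (List.replicate (j + 1) v).flatten) (n + d)
        = prodList (u ++ (List.replicate j v).flatten) n + t := by
      intro j
      rw [List.replicate_succ, List.flatten_cons,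
        prodList_append u _ (n + d) (by rw [← huf]; omega),
        prodList_append v _ (n + d - u.count false) (by rw [← huf, ← hd]; omega),
        prodList_append u _ n (by rw [← huf]; omega)]
      rw [← hd, ← ht, ← huf]
      have : n + d - uf - d = n - uf := by omega
      rw [this]
      ring
    -- monotone family
    have hmono : ∀ j n', prodList (u ++ (List.replicate j v).flatten) n'
        ≤ prodList (u ++ (List.replicate (j+1) v).flatten) n' := by
      intro j n'
      apply prodList_prefix
      refine ⟨v, ?_⟩
      rw [List.append_assoc]
      congr 1
      induction j with
      | zero => simp
      | succ j ih =>
          simp only [List.replicate_succ, List.flatten_cons] at ih ⊢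
          rw [List.append_assoc, ih]
    -- shift the sup index
    have hshift : (⨆ j : ℕ, (prodList (u ++ (List.replicate j v).flatten) (n + d) : ℕ∞))
        = ⨆ j : ℕ, (prodList (u ++ (List.replicate (j + 1) v).flatten) (n + d) : ℕ∞) := by
      apply le_antisymm
      · refine iSup_le fun j => le_iSup_of_le j ?_
        exact_mod_cast hmono j (n + d)
      · exact iSup_le fun j => le_iSup_of_le (j + 1) le_rfl
    rw [hshift]
    have : ∀ j : ℕ, (prodList (u ++ (List.replicate (j + 1) v).flatten) (n + d) : ℕ∞)
        = (prodList (u ++ (List.replicate j v).flatten) n : ℕ∞) + (t : ℕ∞) := by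
      intro j; rw [hF j]; push_cast; ring
    rw [iSup_congr this]
    rw [← ENat.iSup_add]
  · -- unbounded case
    intro hd0 htpos n hn
    rw [prodSeq_eq u v hv]
    rw [iSup_eq_top]
    intro b hb
    lift b to ℕ using hb.ne
    refine ⟨b + 1, ?_⟩
    have hcount : ((List.replicate (b+1) v).flatten).count false = (b+1) * d := by
      rw [hd]
      induction (b+1) with
      | zero => simp
      | succ j ih => simp [List.replicate_succ, ih]; ring
    have hcountt : ((List.replicate (b+1) v).flatten).count true = (b+1) * t := by
      rw [ht]
      induction (b+1) with
      | zero => simp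
      | succ j ih => simp [List.replicate_succ, ih]; ring
    have hcf : (u ++ (List.replicate (b+1) v).flatten).count false ≤ n := by
      simp only [List.count_append, hcount, hd0]
      simpa [← huf] using hn
    rw [prodList_of_count _ n hcf]
    have : b + 1 ≤ (u ++ (List.replicate (b+1) v).flatten).count true := by
      simp only [List.count_append, hcountt]
      have : b + 1 ≤ (b + 1) * t := Nat.le_mul_of_pos_right _ htpos
      omega
    exact_mod_cast Nat.lt_of_lt_of_le (Nat.lt_succ_self b) this
end

section
/- The pointwise infimum of two periodically increasing functions ℕ∞ → ℕ∞ is periodically increasing. -/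
open scoped Classical

/-!
On ℕ, the restrictions of `f` and `g` become eventually linear with a common period `P` and
increments `a`, `b`. If `a = b` the minimum inherits this directly. If `a < b`, either `f` reaches
`⊤`, and then `min f g = g` from that point on, or `f` is finite, and then `g - f` grows by `b - a`
per period, so `min f g = f` eventually.
-/

def PeriodicIncr (u : ℕ → ℕ∞) (N p q : ℕ) : Prop :=
  ∀ n, N ≤ n → u (n + p) = u n + q

namespace PeriodicIncr

variable {u v w : ℕ → ℕ∞} {N p q a b : ℕ}

lemma add_mul (hu : PeriodicIncr u N p q) (k : ℕ) {n : ℕ} (hn : N ≤ n) :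
    u (n + k * p) = u n + (k * q : ℕ) := by
  induction k with
  | zero => simp
  | succ k ih =>
    rw [Nat.succ_mul, ← add_assoc, hu _ (by omega), ih]
    push_cast
    ring

lemma mul (hu : PeriodicIncr u N p q) (k : ℕ) : PeriodicIncr u N (k * p) (k * q) :=
  fun _ hn => hu.add_mul k hn

lemma mono (hu : PeriodicIncr u N p q) {N' : ℕ} (hN : N ≤ N') : PeriodicIncr u N' p q :=
  fun n hn => hu n (hN.trans hn)

lemma congr (hu : PeriodicIncr u N p q) {M : ℕ} (h : ∀ n, M ≤ n → w n = u n) :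
    PeriodicIncr w (max N M) p q := fun n hn => by
  rw [h n (by omega), h (n + p) (by omega), hu n (by omega)]

lemma min_of_eq (hu : PeriodicIncr u N p q) (hv : PeriodicIncr v N p q) :
    PeriodicIncr (fun n => min (u n) (v n)) N p q := fun n hn => by
  simp only [hu n hn, hv n hn, min_add_add_right]

lemma le_of_toNat_le (hu : PeriodicIncr u N p a) (hv : PeriodicIncr v N p b) (hab : a < b)
    {n k : ℕ} (hn : N ≤ n) (hfin : u n ≠ ⊤) (hk : (u n).toNat ≤ k) :
    u (n + k * p) ≤ v (n + k * p) := by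
  rw [hu.add_mul k hn, hv.add_mul k hn, ← ENat.natCast_toNat hfin]
  calc (((u n).toNat : ℕ) : ℕ∞) + ((k * a : ℕ) : ℕ∞) ≤ ((k * b : ℕ) : ℕ∞) := by
        norm_cast
        nlinarith
    _ ≤ v n + ((k * b : ℕ) : ℕ∞) := le_add_self

lemma eventually_le_of_lt (hu : PeriodicIncr u N p a) (hv : PeriodicIncr v N p b)
    (hp : 0 < p) (hab : a < b) (hfin : ∀ n, u n ≠ ⊤) :
    ∃ M, ∀ n, M ≤ n → u n ≤ v n := by
  set K := (Finset.range p).sup fun r => (u (N + r)).toNat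
  refine ⟨N + K * p, fun n hn => ?_⟩
  have hK : K ≤ (n - N) / p := (Nat.le_div_iff_mul_le hp).2 (by omega)
  have hdecomp : n = N + (n - N) % p + (n - N) / p * p := by
    have := Nat.mod_add_div (n - N) p
    rw [mul_comm] at this
    omega
  have hr : (u (N + (n - N) % p)).toNat ≤ K :=
    Finset.le_sup (f := fun r => (u (N + r)).toNat) (Finset.mem_range.2 (Nat.mod_lt _ hp))
  rw [hdecomp]
  exact hu.le_of_toNat_le hv hab (Nat.le_add_right _ _) (hfin _) (hr.trans hK)

lemma exists_min_of_lt (hum : Monotone u) (hu : PeriodicIncr u N p a)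
    (hv : PeriodicIncr v N p b) (hp : 0 < p) (hab : a < b) :
    ∃ N' q, PeriodicIncr (fun n => min (u n) (v n)) N' p q := by
  by_cases htop : ∃ n₀, u n₀ = ⊤
  · obtain ⟨n₀, hn₀⟩ := htop
    refine ⟨max N n₀, b, hv.congr fun n hn => min_eq_right ?_⟩
    exact (hn₀ ▸ hum hn).trans' le_top
  · push Not at htop
    obtain ⟨M, hM⟩ := hu.eventually_le_of_lt hv hp hab htop
    exact ⟨max N M, a, hu.congr fun n hn => min_eq_left (hM n hn)⟩

end PeriodicIncr

open PeriodicIncr in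
lemma exists_periodicIncr_min {u v : ℕ → ℕ∞} (hum : Monotone u) (hvm : Monotone v)
    {N p q N' p' q' : ℕ} (hp : 0 < p) (hp' : 0 < p')
    (hu : PeriodicIncr u N p q) (hv : PeriodicIncr v N' p' q') :
    ∃ M P Q, 0 < P ∧ PeriodicIncr (fun n => min (u n) (v n)) M P Q := by
  have hu' := (hu.mul p').mono (le_max_left N N')
  have hv' := (mul_comm p p' ▸ hv.mul p).mono (le_max_right N N')
  have hP : 0 < p' * p := Nat.mul_pos hp' hp
  rcases lt_trichotomy (p' * q) (p * q') with hlt | heq | hgt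
  · obtain ⟨M, Q, h⟩ := exists_min_of_lt hum hu' hv' hP hlt
    exact ⟨M, _, Q, hP, h⟩
  · exact ⟨_, _, _, hP, hu'.min_of_eq (heq ▸ hv')⟩
  · obtain ⟨M, Q, h⟩ := exists_min_of_lt hvm hv' hu' hP hgt
    exact ⟨M, _, Q, hP, fun n hn => by simpa only [min_comm] using h n hn⟩

lemma periodicIncr_comp_natCast_iff {f : ℕ∞ → ℕ∞} {N p q : ℕ} :
    PeriodicIncr (fun n : ℕ => f n) N p q ↔
      ∀ n : ℕ, N ≤ n → f ((n : ℕ∞) + (p : ℕ∞)) = f n + (q : ℕ∞) := by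
  simp only [PeriodicIncr, Nat.cast_add]

/-- The pointwise infimum of two periodically increasing functions on ℕ∞ is
periodically increasing. -/
theorem perInc_min (f g : ℕ∞ → ℕ∞) (hf : PerInc f) (hg : PerInc g) :
    PerInc (fun n => min (f n) (g n)) := by
  obtain ⟨hfm, hfc, hftop, Nf, p, q, hp, hfper⟩ := hf
  obtain ⟨hgm, hgc, hgtop, Ng, p', q', hp', hgper⟩ := hg
  refine ⟨hfm.min hgm, fun c hc => ?_, ?_, ?_⟩
  · simp only [hfc c hc, hgc c hc]
    exact (iSup_inf_of_monotone (hfm.comp hc) (hgm.comp hc)).symm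
  · simp only [hftop, hgtop]
    exact (iSup_inf_of_monotone (hfm.comp Nat.mono_cast) (hgm.comp Nat.mono_cast)).symm
  · obtain ⟨M, P, Q, hP, h⟩ := exists_periodicIncr_min (hfm.comp Nat.mono_cast)
      (hgm.comp Nat.mono_cast) hp hp' (periodicIncr_comp_natCast_iff.2 hfper)
      (periodicIncr_comp_natCast_iff.2 hgper)
    exact ⟨M, P, Q, hP, periodicIncr_comp_natCast_iff (f := fun n => min (f n) (g n)) |>.1 h⟩
end

section
/- The composition of two periodically increasing functions ℕ∞ → ℕ∞ is periodically increasing. -/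
open scoped Classical

/-- Periodically increasing functions, context-5 variant: monotone,
ω-continuous, determined at ∞ by finite values, eventually linear-periodic on
the finite values, and absorbing at ∞. -/
def PerInc5 (f : ℕ∞ → ℕ∞) : Prop :=
  Monotone f ∧
  (∀ c : ℕ → ℕ∞, Monotone c → f (⨆ k, c k) = ⨆ k, f (c k)) ∧
  (f ⊤ = ⨆ n : ℕ, f n) ∧
  (∃ N p q : ℕ, 1 ≤ p ∧
    ∀ n : ℕ, N ≤ n → f n ≠ ⊤ → f ((n : ℕ∞) + (p : ℕ∞)) = f n + (q : ℕ∞)) ∧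
  (∀ n : ℕ, f n = ⊤ → ∀ m : ℕ, n ≤ m → f m = ⊤)

/-- The composition of two periodically increasing functions is periodically
increasing. -/
theorem perInc_comp (f g : ℕ∞ → ℕ∞) (hf : PerInc5 f) (hg : PerInc5 g) :
    PerInc5 (f ∘ g) := by
  obtain ⟨hfm, hfc, hft, ⟨Nf, pf, qf, hpf, hfp⟩, hfa⟩ := hf
  obtain ⟨hgm, hgc, hgt, ⟨Ng, pg, qg, hpg, hgp⟩, hga⟩ := hg
  refine ⟨hfm.comp hgm, ?_, ?_, ?_, ?_⟩
  · intro c hc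
    simp only [Function.comp]
    rw [hgc c hc, hfc (fun k => g (c k)) (hgm.comp hc)]
  · simp only [Function.comp]
    rw [hgt, hfc (fun n => g n) (fun a b h => hgm (by exact_mod_cast h))]
  · -- periodicity
    by_cases htop : ∃ n0 : ℕ, g n0 = ⊤
    · obtain ⟨n0, hn0⟩ := htop
      refine ⟨n0, 1, 0, le_refl 1, fun n hn _ => ?_⟩
      have h1 : g n = ⊤ := hga n0 hn0 n hn
      have h2 : g ((n:ℕ∞) + 1) = ⊤ := top_le_iff.mp (h1 ▸ hgm le_self_add)
      simp [Function.comp, h1, h2]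
    · push_neg at htop
      have gA : ∀ k n : ℕ, Ng ≤ n →
          g ((n + k * pg : ℕ) : ℕ∞) = g n + ((k * qg : ℕ) : ℕ∞) := by
        intro k
        induction k with
        | zero => simp
        | succ k ih =>
          intro n hn
          have h1 : ((n + (k+1) * pg : ℕ) : ℕ∞) = ((n + k*pg : ℕ) : ℕ∞) + (pg : ℕ∞) := by
            push_cast; ring
          rw [h1, hgp (n + k*pg) (le_trans hn (Nat.le_add_right _ _)) (htop _), ih n hn]
          push_cast; ring
      rcases Nat.eq_zero_or_pos qg with hqg | hqg
      · refine ⟨Ng, pg, 0, hpg, fun n hn _ => ?_⟩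
        have h1 := hgp n hn (htop n)
        subst hqg
        simp only [Function.comp, Nat.cast_zero, add_zero] at h1 ⊢
        rw [h1]
      · have fB : ∀ k (m : ℕ), Nf ≤ m → f m ≠ ⊤ →
            f ((m + k * pf : ℕ) : ℕ∞) = f m + ((k * qf : ℕ) : ℕ∞) := by
          intro k
          induction k with
          | zero => simp
          | succ k ih =>
            intro m hm hfin
            have h1 : ((m + (k+1) * pf : ℕ) : ℕ∞) = ((m + k*pf : ℕ) : ℕ∞) + (pf : ℕ∞) := by
              push_cast; ring
            have h2 := ih m hm hfin
            have h3 : f ((m + k*pf : ℕ) : ℕ∞) ≠ ⊤ := by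
              rw [h2]; exact WithTop.add_ne_top.mpr ⟨hfin, WithTop.coe_ne_top⟩
            rw [h1, hfp (m + k*pf) (le_trans hm (Nat.le_add_right _ _)) h3, h2]
            push_cast; ring
        refine ⟨Ng + Nf * pg, pg * pf, qg * qf, ?_, fun n hn hfin => ?_⟩
        · exact Nat.one_le_iff_ne_zero.mpr
            (Nat.mul_ne_zero (Nat.one_le_iff_ne_zero.mp hpg) (Nat.one_le_iff_ne_zero.mp hpf))
        · simp only [Function.comp] at hfin ⊢
          obtain ⟨a, ha0⟩ := WithTop.ne_top_iff_exists.mp (htop n)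
          have ha : ((a : ℕ) : ℕ∞) = g n := by exact_mod_cast ha0
          have hNgn : Ng ≤ n := le_trans (Nat.le_add_right _ _) hn
          -- show Nf ≤ a
          have hga2 : g ((Ng + Nf * pg : ℕ) : ℕ∞) = g Ng + ((Nf * qg : ℕ) : ℕ∞) :=
            gA Nf Ng le_rfl
          have hNfa : (Nf : ℕ∞) ≤ (a : ℕ∞) := by
            calc (Nf : ℕ∞) ≤ ((Nf * qg : ℕ) : ℕ∞) := by
                  exact_mod_cast Nat.le_mul_of_pos_right Nf hqg
              _ ≤ g Ng + ((Nf * qg : ℕ) : ℕ∞) := le_add_self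
              _ = g ((Ng + Nf * pg : ℕ) : ℕ∞) := hga2.symm
              _ ≤ g n := hgm (by exact_mod_cast hn)
              _ = (a : ℕ∞) := ha.symm
          have hNfa' : Nf ≤ a := by exact_mod_cast hNfa
          have hstep : g ((n : ℕ∞) + ((pg * pf : ℕ) : ℕ∞)) = ((a + qg * pf : ℕ) : ℕ∞) := by
            have : (n : ℕ∞) + ((pg * pf : ℕ) : ℕ∞) = ((n + pf * pg : ℕ) : ℕ∞) := by
              push_cast; ring
            rw [this, gA pf n hNgn, ← ha, ← Nat.cast_add]
            congr 1
            ring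
          have hfina : f ((a : ℕ∞)) ≠ ⊤ := by rw [ha]; exact hfin
          rw [hstep, fB qg a hNfa' hfina, ha]
  · intro n hn m hm
    have := hfm.comp hgm (show (n:ℕ∞) ≤ (m:ℕ∞) by exact_mod_cast hm)
    exact top_le_iff.mp (hn ▸ this)
end

section
/- Let s : ℕ∞ → ℕ∞ be defined by the system s(n) = min(c, s₁(n)) where c ∈ ℕ∞ and s₁ satisfies equations derived from the rules b₁(n) = if n < 2 then 0 else 1 + b₃(n−1), b₂(n) = 1 + b₁(n+1), b₃(n) = 1 + b₂(n+1), s₁(n) = if n < 1 then 0 else 1 + min(b₁(n−1), b₂(n−1), b₃(n−1)). Then the unique continuous solution satisfies: b₃(n) = ∞ for all n, b₂(0) = 1 and b₂(n) = ∞ for n ≥ 1, b₁(n) = 0 for n ≤ 1 and b₁(n) = ∞ for n ≥ 2, hence s₁(0) = 0, s₁(1) = s₁(2) = 1, and s₁(n) = ∞ for n ≥ 3. -/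
open scoped Classical

theorem ENat.eq_top_of_one_add_le_comp {α : Type*} (f : α → ℕ∞) (S : Set α) (next : α → α)
    (hS : Set.MapsTo next S S) (hf : ∀ x ∈ S, 1 + f (next x) ≤ f x) : ∀ x ∈ S, f x = ⊤ := by
  have hge : ∀ k : ℕ, ∀ x ∈ S, (k : ℕ∞) ≤ f x := by
    intro k
    induction k with
    | zero => simp
    | succ k ih =>
      intro x hx
      calc ((k + 1 : ℕ) : ℕ∞) = 1 + k := by push_cast; ring
        _ ≤ 1 + f (next x) := by gcongr; exact ih _ (hS hx)
        _ ≤ f x := hf x hx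
  exact fun x hx => ENat.eq_top_iff_forall_ge.2 fun k => hge k x hx

theorem pure_example_solution_values_general (s₁ b₁ b₂ b₃ : ℕ∞ → ℕ∞)
    (hb₁ : ∀ n : ℕ∞, b₁ n = if n < 2 then 0 else 1 + b₃ (n - 1))
    (hb₂ : ∀ n : ℕ∞, b₂ n = 1 + b₁ (n + 1))
    (hb₃ : ∀ n : ℕ∞, b₃ n = 1 + b₂ (n + 1))
    (hs₁ : ∀ n : ℕ∞,
      s₁ n = if n < 1 then 0
             else 1 + min (b₁ (n - 1)) (min (b₂ (n - 1)) (b₃ (n - 1)))) :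
    (∀ n : ℕ∞, b₃ n = ⊤) ∧
    b₂ 0 = 1 ∧ (∀ n : ℕ∞, 1 ≤ n → b₂ n = ⊤) ∧
    (∀ n : ℕ∞, n ≤ 1 → b₁ n = 0) ∧ (∀ n : ℕ∞, 2 ≤ n → b₁ n = ⊤) ∧
    s₁ 0 = 0 ∧ s₁ 1 = 1 ∧ s₁ 2 = 1 ∧ (∀ n : ℕ∞, 3 ≤ n → s₁ n = ⊤) := by
  have hb₁_small (n : ℕ∞) (hn : n ≤ 1) : b₁ n = 0 := by
    rw [hb₁, if_pos (hn.trans_lt (by norm_num))]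
  -- Unfolding `b₁ → b₃ → b₂ → b₁` consumes no input but produces three outputs.
  have hb₁_top : ∀ n : ℕ∞, 2 ≤ n → b₁ n = ⊤ := by
    refine ENat.eq_top_of_one_add_le_comp b₁ (Set.Ici 2) (· + 1)
      (fun _ hn => le_add_right (Set.mem_Ici.1 hn)) fun n hn => ?_
    rw [hb₁ n, if_neg (not_lt.2 hn), hb₃, tsub_add_cancel_of_le (one_le_two.trans hn), hb₂]
    gcongr
    exact le_add_self.trans le_add_self
  have hb₂_top (n : ℕ∞) (hn : 1 ≤ n) : b₂ n = ⊤ := by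
    rw [hb₂, hb₁_top _ (one_add_one_eq_two.symm.trans_le (add_le_add_left hn 1)), add_top]
  have hb₃_top (n : ℕ∞) : b₃ n = ⊤ := by
    rw [hb₃, hb₂_top _ le_add_self, add_top]
  refine ⟨hb₃_top, ?_, hb₂_top, hb₁_small, hb₁_top, by simp [hs₁], ?_, ?_, fun n hn => ?_⟩
  · rw [hb₂, zero_add, hb₁_small 1 le_rfl, add_zero]
  · simp [hs₁, hb₁_small, hb₃_top]
  · have : (2 : ℕ∞) - 1 = 1 := rfl
    simp [hs₁, this, hb₁_small]
  · have h2 : 2 ≤ n - 1 := ENat.le_sub_of_add_le_right ENat.one_ne_top hn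
    rw [hs₁, if_neg (not_lt.2 ((by norm_num : (1 : ℕ∞) ≤ 3).trans hn)), hb₁_top _ h2,
      hb₂_top _ (one_le_two.trans h2), hb₃_top]
    simp

/-- The values of the unique continuous solution of the production equation
system of the pure stream specification
f(x:σ) → x : b(σ,σ,σ), b(x:y:σ, τ, υ) → x : b(y:τ, y:υ, y:σ). -/
theorem pure_example_solution_values (c : ℕ∞) (s s₁ b₁ b₂ b₃ : ℕ∞ → ℕ∞)
    (hsc : NEContinuous s) (hs₁c : NEContinuous s₁)
    (hb₁c : NEContinuous b₁) (hb₂c : NEContinuous b₂) (hb₃c : NEContinuous b₃)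
    (hb₁ : ∀ n : ℕ∞, b₁ n = if n < 2 then 0 else 1 + b₃ (n - 1))
    (hb₂ : ∀ n : ℕ∞, b₂ n = 1 + b₁ (n + 1))
    (hb₃ : ∀ n : ℕ∞, b₃ n = 1 + b₂ (n + 1))
    (hs₁ : ∀ n : ℕ∞,
      s₁ n = if n < 1 then 0
             else 1 + min (b₁ (n - 1)) (min (b₂ (n - 1)) (b₃ (n - 1))))
    (hs : ∀ n : ℕ∞, s n = min c (s₁ n)) :
    (∀ n : ℕ∞, b₃ n = ⊤) ∧
    b₂ 0 = 1 ∧ (∀ n : ℕ∞, 1 ≤ n → b₂ n = ⊤) ∧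
    (∀ n : ℕ∞, n ≤ 1 → b₁ n = 0) ∧ (∀ n : ℕ∞, 2 ≤ n → b₁ n = ⊤) ∧
    s₁ 0 = 0 ∧ s₁ 1 = 1 ∧ s₁ 2 = 1 ∧ (∀ n : ℕ∞, 3 ≤ n → s₁ n = ⊤) :=
  pure_example_solution_values_general s₁ b₁ b₂ b₃ hb₁ hb₂ hb₃ hs₁
end

section
/- Consider the system on continuous functions ℕ∞ → ℕ∞: a(n) = min(a₀(n), a₁(n)) where a₀(n) = if n < 1 then 0 else b(n−1), a₁(n) = if n < 2 then 0 else 1 + b(n−2), and b(n) = if n < 2 then 0 else 2 + b(n−2). Then the unique continuous solution satisfies b(n) = 2·⌊n/2⌋ for finite n (so b(n) = n for even n, n−1 for odd n), b(∞) = ∞, and a(n) = n ∸ 2 for all n ∈ ℕ∞ (with a(∞) = ∞). -/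
open scoped Classical

lemma flat_b_nat (b : ℕ∞ → ℕ∞)
    (hb : ∀ n : ℕ∞, b n = if n < 2 then 0 else 2 + b (n - 2)) :
    ∀ n : ℕ, b (n : ℕ∞) = ((2 * (n / 2) : ℕ) : ℕ∞) := by
  intro n
  induction n using Nat.strong_induction_on with
  | _ n ih =>
    match n with
    | 0 => rw [hb]; norm_num
    | 1 => rw [hb]; norm_num
    | (m+2) =>
      rw [hb]
      have h2 : ¬ ((m+2 : ℕ) : ℕ∞) < 2 := by
        push_cast; exact not_lt.mpr (by exact_mod_cast Nat.le_add_left 2 m)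
      rw [if_neg h2]
      have hsub : ((m+2 : ℕ) : ℕ∞) - 2 = (m : ℕ∞) := by
        have h := ENat.coe_sub (m+2) 2
        norm_num at h
        exact h.symm
      rw [hsub, ih m (by omega)]
      have : 2 * ((m+2)/2) = 2 + 2 * (m/2) := by omega
      rw [this]; push_cast; ring

/-- The values of the unique continuous solution of the production equation
system of the flat stream specification
a(0:σ) → b(σ), a(1:x:σ) → x : b(σ), b(x:y:σ) → x : y : b(σ). -/
theorem flat_example_solution_values (a a₀ a₁ b : ℕ∞ → ℕ∞)
    (hac : NEContinuous a) (ha₀c : NEContinuous a₀)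
    (ha₁c : NEContinuous a₁) (hbc : NEContinuous b)
    (hb : ∀ n : ℕ∞, b n = if n < 2 then 0 else 2 + b (n - 2))
    (ha₀ : ∀ n : ℕ∞, a₀ n = if n < 1 then 0 else b (n - 1))
    (ha₁ : ∀ n : ℕ∞, a₁ n = if n < 2 then 0 else 1 + b (n - 2))
    (ha : ∀ n : ℕ∞, a n = min (a₀ n) (a₁ n)) :
    (∀ n : ℕ, b (n : ℕ∞) = ((2 * (n / 2) : ℕ) : ℕ∞)) ∧
    b ⊤ = ⊤ ∧
    (∀ n : ℕ∞, a n = n - 2) := by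
  have hbn := flat_b_nat b hb
  have hbtop : b ⊤ = ⊤ := by
    have := hbc.2 (fun k => (k : ℕ∞)) (fun i j h => by simpa using h)
    rw [ENat.iSup_natCast] at this
    rw [this, eq_top_iff]
    refine le_of_forall_lt fun c hc => ?_
    lift c to ℕ using hc.ne_top
    calc (c : ℕ∞) < ((2 * ((2*(c+1)) / 2) : ℕ) : ℕ∞) := by
            exact_mod_cast (by omega : c < 2 * ((2*(c+1)) / 2))
      _ = b ((2*(c+1) : ℕ) : ℕ∞) := (hbn _).symm
      _ ≤ ⨆ k : ℕ, b (k : ℕ∞) := le_iSup (fun k : ℕ => b (k : ℕ∞)) (2*(c+1))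
  refine ⟨hbn, hbtop, fun n => ?_⟩
  rw [ha]
  cases n with
  | top =>
    rw [ha₀, ha₁]
    have h1 : (⊤ : ℕ∞) - 1 = ⊤ := by simp
    have h2 : (⊤ : ℕ∞) - 2 = ⊤ := by simp
    rw [if_neg (by simp), if_neg (by simp), h1, h2, hbtop]
    simp
  | coe n =>
    rw [ha₀, ha₁]
    have hc2 : ((n : ℕ∞) < 2) ↔ n < 2 := by exact_mod_cast Iff.rfl
    have hc1 : ((n : ℕ∞) < 1) ↔ n < 1 := by exact_mod_cast Iff.rfl
    have hs1 : (n : ℕ∞) - 1 = ((n - 1 : ℕ) : ℕ∞) := by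
      rw [ENat.coe_sub]; norm_num
    have hs2 : (n : ℕ∞) - 2 = ((n - 2 : ℕ) : ℕ∞) := by
      rw [ENat.coe_sub]; norm_num
    rw [hs2]
    rcases lt_or_ge n 1 with h1 | h1
    · interval_cases n
      rw [if_pos (hc1.mpr (by omega)), if_pos (hc2.mpr (by omega))]
      simp
    rcases lt_or_ge n 2 with h2 | h2
    · interval_cases n
      rw [if_neg (fun h => absurd (hc1.mp h) (by omega)), if_pos (hc2.mpr (by omega)), hs1, hbn]
      simp
    · rw [if_neg (fun h => absurd (hc1.mp h) (by omega)),
        if_neg (fun h => absurd (hc2.mp h) (by omega)), hs1, hbn, hbn]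
      have h3 : (1 : ℕ∞) + ((2 * ((n-2) / 2) : ℕ) : ℕ∞)
          = ((1 + 2 * ((n-2)/2) : ℕ) : ℕ∞) := by push_cast; ring
      rw [h3]
      rcases le_total (2*((n-1)/2)) (1+2*((n-2)/2)) with h | h
      · rw [min_eq_left (by exact_mod_cast h)]
        exact_mod_cast (by omega : 2*((n-1)/2) = n-2)
      · rw [min_eq_right (by exact_mod_cast h)]
        exact_mod_cast (by omega : 1+2*((n-2)/2) = n-2)
end

section
/- For every k-tuple of io-sequences (σ₁, …, σ_k) and every c ∈ ℕ∞, the function F : (ℕ∞)^k → ℕ∞ defined by F(n₁, …, n_k) = min(c, ⟦σ₁⟧(n₁), …, ⟦σ_k⟧(n_k)) is monotone and continuous in each argument, and if each σ_i is eventually periodic then F restricted along the diagonal n ↦ F(n, …, n) is a periodically increasing function ℕ∞ → ℕ∞. -/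
/-!
Each `⟦σ⟧` is a supremum of productions of finite prefixes on finite budgets, so it commutes
with suprema of chains; in the frame `ℕ∞`, `min c` and a finite `⨅` of monotone chains commute
with `⨆` as well.

For a rational `σ = u vᵚ`, once the budget covers the inputs of `u`, granting the inputs of one
more copy of `v` yields exactly the outputs of that copy, so `⟦σ⟧` is eventually affine-periodic
on `ℕ` (and eventually `⊤` when `v` has no inputs). Such functions are closed under `min`: over a
common period the one of smaller slope eventually stays below the other, unless it is already `⊤`.
-/

open scoped Classical

open Filter

lemma monotone_prodList (l : List Bool) : Monotone (prodList l) := by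
  induction l with
  | nil => exact monotone_const
  | cons b l ih =>
    intro m n hmn
    cases b with
    | true => simpa [prodList] using ih hmn
    | false =>
      cases m with
      | zero => simp [prodList]
      | succ m =>
        obtain ⟨n, rfl⟩ : ∃ n', n = n' + 1 := ⟨n - 1, by omega⟩
        simpa [prodList] using ih (by omega : m ≤ n)

lemma prodList_le_prodList_append (a b : List Bool) (n : ℕ) :
    prodList a n ≤ prodList (a ++ b) n := by
  induction a generalizing n with
  | nil => simp [prodList]
  | cons x a ih =>
    cases x with
    | true => simpa [prodList] using ih n
    | false => cases n <;> simp [prodList, ih]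

lemma prodList_le_of_prefix {a b : List Bool} (h : a <+: b) (n : ℕ) :
    prodList a n ≤ prodList b n := by
  obtain ⟨t, rfl⟩ := h
  exact prodList_le_prodList_append a t n

lemma prodList_append_of_count_false_le {a : List Bool} {n : ℕ} (h : a.count false ≤ n)
    (b : List Bool) : prodList (a ++ b) n = a.count true + prodList b (n - a.count false) := by
  induction a generalizing n with
  | nil => simp
  | cons x a ih =>
    cases x with
    | true =>
      rw [List.count_cons_of_ne (by decide)] at h
      rw [List.cons_append, prodList, ih h, List.count_cons_self, List.count_cons_of_ne (by decide)]
      omega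
    | false =>
      simp only [List.count_cons_self] at h
      obtain ⟨n, rfl⟩ : ∃ n', n = n' + 1 := ⟨n - 1, by omega⟩
      simp [prodList, ih (by omega : a.count false ≤ n)]

lemma prodList_of_count_false_le {l : List Bool} {n : ℕ} (h : l.count false ≤ n) :
    prodList l n = l.count true := by
  simpa [prodList] using prodList_append_of_count_false_le h []

lemma prodList_append_append_add_count_false {a : List Bool} {n : ℕ} (h : a.count false ≤ n)
    (v w : List Bool) :
    prodList (a ++ v ++ w) (n + v.count false) = prodList (a ++ w) n + v.count true := by
  rw [prodList_append_of_count_false_le (by simp; omega),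
    prodList_append_of_count_false_le h]
  simp only [List.count_append]
  rw [show n + v.count false - (a.count false + v.count false) = n - a.count false by omega]
  ring

namespace Stream'.Seq

variable {α : Type*}

lemma take_prefix_take (s : Seq α) {m n : ℕ} (h : m ≤ n) : s.take m <+: s.take n := by
  have : (s.take n).take m = s.take m := List.ext_getElem? fun i => by
    simp only [List.getElem?_take, getElem?_take]
    grind
  exact this ▸ List.take_prefix m _

lemma take_ofList (l : List α) (k : ℕ) : (ofList l).take k = l.take k :=
  List.ext_getElem? fun i => by simp [ofList_get?, List.getElem?_take]

lemma take_ofList_append (a : List α) (s : Seq α) (k : ℕ) :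
    ((ofList a).append s).take (a.length + k) = a ++ s.take k := by
  induction a with
  | nil => simp
  | cons x a ih =>
    rw [ofList_cons, cons_append, List.length_cons, Nat.add_right_comm, take_succ_cons, ih,
      List.cons_append]

lemma take_ofStream_cycle (v : List α) (hv : v ≠ []) (j : ℕ) :
    (ofStream (Stream'.cycle v hv)).take (j * v.length) = (List.replicate j v).flatten := by
  induction j with
  | zero => simp
  | succ j ih =>
    conv_lhs => rw [Stream'.cycle_eq v hv]
    rw [ofStream_append, Nat.succ_mul, Nat.add_comm, take_ofList_append, ih,
      List.replicate_succ, List.flatten_cons]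

end Stream'.Seq

lemma ENat.exists_natCast_le_of_le_iSup {ι : Sort*} [Nonempty ι] {m : ℕ} {f : ι → ℕ∞}
    (h : (m : ℕ∞) ≤ ⨆ i, f i) : ∃ i, (m : ℕ∞) ≤ f i := by
  cases m with
  | zero => exact ⟨Classical.arbitrary ι, by simp⟩
  | succ m =>
    obtain ⟨i, hi⟩ := lt_iSup_iff.mp ((Nat.cast_lt.mpr m.lt_succ_self).trans_le h)
    exact ⟨i, by simpa using Order.add_one_le_of_lt hi⟩

lemma ENat.eq_top_of_add_eq_self {a : ℕ∞} {t : ℕ} (ht : 0 < t) (h : a + t = a) : a = ⊤ := by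
  by_contra ha
  lift a to ℕ using ha
  norm_cast at h
  omega

lemma prodSeq_mono (σ : Stream'.Seq Bool) : Monotone (prodSeq σ) := fun _ _ h =>
  iSup₂_mono fun _ _ => iSup_mono' fun hm => ⟨hm.trans h, le_rfl⟩

lemma prodSeq_natCast (σ : Stream'.Seq Bool) (n : ℕ) :
    prodSeq σ n = ⨆ k, (prodList (σ.take k) n : ℕ∞) := by
  refine le_antisymm (iSup_le fun k => iSup₂_le fun m hm => le_iSup_of_le k ?_)
    (iSup_le fun k => le_iSup_of_le k (le_iSup₂_of_le n le_rfl le_rfl))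
  exact Nat.cast_le.mpr (monotone_prodList _ (Nat.cast_le.mp hm))

lemma prodSeq_iSup (σ : Stream'.Seq Bool) {ι : Sort*} [Nonempty ι] (f : ι → ℕ∞) :
    prodSeq σ (⨆ i, f i) = ⨆ i, prodSeq σ (f i) := by
  refine le_antisymm (iSup_le fun k => iSup₂_le fun m hm => ?_)
    (iSup_le fun i => prodSeq_mono σ (le_iSup f i))
  obtain ⟨i, hi⟩ := ENat.exists_natCast_le_of_le_iSup hm
  exact le_iSup_of_le i (le_iSup_of_le k (le_iSup₂_of_le m hi le_rfl))

lemma neContinuous_prodSeq (σ : Stream'.Seq Bool) : NEContinuous (prodSeq σ) :=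
  ⟨prodSeq_mono σ, fun c _ => prodSeq_iSup σ c⟩

lemma prodSeq_natCast_eq_iSup_take (σ : Stream'.Seq Bool) {ks : ℕ → ℕ}
    (hks : ∀ k, ∃ j, k ≤ ks j) (n : ℕ) :
    prodSeq σ n = ⨆ j, (prodList (σ.take (ks j)) n : ℕ∞) := by
  rw [prodSeq_natCast]
  refine le_antisymm (iSup_le fun k => ?_) (iSup_le fun j => le_iSup_of_le (ks j) le_rfl)
  obtain ⟨j, hj⟩ := hks k
  exact le_iSup_of_le j (Nat.cast_le.mpr (prodList_le_of_prefix (σ.take_prefix_take hj) n))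

open Stream'.Seq in
lemma prodSeq_ofList (l : List Bool) (n : ℕ) : prodSeq (ofList l) n = prodList l n := by
  rw [prodSeq_natCast]
  refine le_antisymm (iSup_le fun k => ?_) (le_iSup_of_le l.length ?_)
  · rw [take_ofList]
    exact Nat.cast_le.mpr (prodList_le_of_prefix (l.take_prefix k) n)
  · rw [take_ofList, List.take_length]

open Stream'.Seq in
lemma prodSeq_ofList_append_cycle (u v : List Bool) (hv : v ≠ []) (n : ℕ) :
    prodSeq ((ofList u).append (ofStream (Stream'.cycle v hv))) n =
      ⨆ j, (prodList (u ++ (List.replicate j v).flatten) n : ℕ∞) := by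
  have hv : 0 < v.length := List.length_pos_iff.mpr hv
  rw [prodSeq_natCast_eq_iSup_take _ (ks := fun j => u.length + j * v.length)
    (fun k => ⟨k, by nlinarith⟩)]
  simp only [take_ofList_append, take_ofStream_cycle]

open Stream'.Seq in
lemma prodSeq_ofList_append_cycle_add (u v : List Bool) (hv : v ≠ []) {n : ℕ}
    (hn : u.count false ≤ n) :
    prodSeq ((ofList u).append (ofStream (Stream'.cycle v hv))) (n + v.count false : ℕ) =
      prodSeq ((ofList u).append (ofStream (Stream'.cycle v hv))) n + v.count true := by
  have hmono (m : ℕ) : Monotone fun j => (prodList (u ++ (List.replicate j v).flatten) m : ℕ∞) := by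
    refine monotone_nat_of_le_succ fun j => Nat.cast_le.mpr (prodList_le_of_prefix ?_ m)
    rw [List.replicate_succ', List.flatten_append, ← List.append_assoc]
    exact List.prefix_append _ _
  rw [prodSeq_ofList_append_cycle, prodSeq_ofList_append_cycle, ← (hmono _).iSup_nat_add 1,
    ENat.iSup_add]
  congr 1 with j
  rw [List.replicate_succ, List.flatten_cons, ← List.append_assoc,
    prodList_append_append_add_count_false hn, Nat.cast_add]

def HasAffinePeriod (f : ℕ → ℕ∞) (N p q : ℕ) : Prop :=
  ∀ n, N ≤ n → f (n + p) = f n + q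

/-- The restriction of a `PerInc` function to `ℕ`. -/
def PerIncSeq (f : ℕ → ℕ∞) : Prop :=
  Monotone f ∧ ∃ N p q : ℕ, 0 < p ∧ HasAffinePeriod f N p q

namespace HasAffinePeriod

variable {f g : ℕ → ℕ∞} {N p q : ℕ}

lemma of_le (h : HasAffinePeriod f N p q) {N' : ℕ} (hN : N ≤ N') : HasAffinePeriod f N' p q :=
  fun n hn => h n (hN.trans hn)

lemma mul (h : HasAffinePeriod f N p q) (m : ℕ) : HasAffinePeriod f N (m * p) (m * q) := by
  intro n hn
  induction m with
  | zero => simp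
  | succ m ih =>
    rw [Nat.succ_mul, ← add_assoc, h _ (by omega), ih, Nat.succ_mul, Nat.cast_add, add_assoc]

lemma add_mul (h : HasAffinePeriod f N p q) {n : ℕ} (hn : N ≤ n) (m : ℕ) :
    f (n + m * p) = f n + (m * q : ℕ) :=
  h.mul m n hn

lemma eventually_le (hf : Monotone f) (hF : HasAffinePeriod f N p q)
    {q' : ℕ} (hG : HasAffinePeriod g N p q') (hp : 0 < p) (hq : q < q') (hfin : f (N + p) ≠ ⊤) :
    ∀ᶠ n in atTop, f n ≤ g n := by
  set B := (f (N + p)).toNat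
  refine eventually_atTop.mpr ⟨N + B * p, fun n hn => ?_⟩
  obtain ⟨m, r, hNr, hr, rfl⟩ : ∃ m r, N ≤ r ∧ r < N + p ∧ n = r + m * p := ⟨(n - N) / p,
    N + (n - N) % p, by omega, by have := Nat.mod_lt (n - N) hp; omega,
    by have := Nat.div_add_mod' (n - N) p; omega⟩
  have hBm : B ≤ m := Nat.le_of_lt_succ <| Nat.lt_of_mul_lt_mul_right (a := p) (by grind)
  have hslope : B + m * q ≤ m * q' := by nlinarith
  calc f (r + m * p) = f r + (m * q : ℕ) := hF.add_mul hNr m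
    _ ≤ B + (m * q : ℕ) := by
      gcongr
      exact (hf hr.le).trans (ENat.natCast_toNat hfin).ge
    _ ≤ (m * q' : ℕ) := by exact_mod_cast hslope
    _ ≤ g r + (m * q' : ℕ) := le_add_self
    _ = g (r + m * p) := (hG.add_mul hNr m).symm

end HasAffinePeriod

namespace PerIncSeq

variable {f g : ℕ → ℕ∞}

lemma const (c : ℕ∞) : PerIncSeq fun _ => c :=
  ⟨monotone_const, 0, 1, 0, one_pos, fun _ _ => by simp⟩

lemma exists_common_period (hf : PerIncSeq f) (hg : PerIncSeq g) :
    ∃ N p q q', 0 < p ∧ HasAffinePeriod f N p q ∧ HasAffinePeriod g N p q' := by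
  obtain ⟨-, N, p, q, hp, hF⟩ := hf
  obtain ⟨-, N', p', q', hp', hG⟩ := hg
  refine ⟨max N N', p' * p, p' * q, p * q', Nat.mul_pos hp' hp,
    (hF.mul p').of_le (le_max_left _ _), ?_⟩
  rw [Nat.mul_comm p']
  exact (hG.mul p).of_le (le_max_right _ _)

lemma min_of_eventually_le (hf : PerIncSeq f) (hg : Monotone g) (hfg : ∀ᶠ n in atTop, f n ≤ g n) :
    PerIncSeq fun n => min (f n) (g n) := by
  obtain ⟨hf, N, p, q, hp, hF⟩ := hf
  obtain ⟨M, hM⟩ := eventually_atTop.mp hfg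
  refine ⟨hf.min hg, max N M, p, q, hp, fun n hn => ?_⟩
  dsimp only
  rw [min_eq_left (hM _ (by omega)), min_eq_left (hM _ (by omega)), hF n (by omega)]

lemma min (hf : PerIncSeq f) (hg : PerIncSeq g) : PerIncSeq fun n => min (f n) (g n) := by
  obtain ⟨N, p, q, q', hp, hF, hG⟩ := hf.exists_common_period hg
  wlog hqq' : q ≤ q' generalizing f g q q'
  · simpa only [min_comm] using this hg hf q' q hG hF (by omega)
  obtain hqq' | rfl := hqq'.lt_or_eq
  · by_cases hfin : f (N + p) = ⊤
    · have hfg : ∀ᶠ n in atTop, g n ≤ f n := eventually_atTop.mpr ⟨N + p, fun n hn => by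
        rw [top_le_iff.mp (hfin ▸ hf.1 hn : ⊤ ≤ f n)]
        exact le_top⟩
      simpa only [min_comm] using hg.min_of_eventually_le hf.1 hfg
    · exact hf.min_of_eventually_le hg.1 (hF.eventually_le hf.1 hG hp hqq' hfin)
  · refine ⟨hf.1.min hg.1, N, p, q, hp, fun n hn => ?_⟩
    dsimp only
    rw [hF n hn, hG n hn, min_add_add_right]

lemma iInf {ι : Type*} [Finite ι] {f : ι → ℕ → ℕ∞} (hf : ∀ i, PerIncSeq (f i)) :
    PerIncSeq fun n => ⨅ i, f i n := by
  have := Fintype.ofFinite ι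
  simp only [← Finset.inf_univ_eq_iInf]
  induction (Finset.univ : Finset ι) using Finset.induction_on with
  | empty => exact const ⊤
  | insert i s _ ih => simpa only [Finset.inf_insert] using (hf i).min ih

end PerIncSeq

open Stream'.Seq in
lemma perIncSeq_prodSeq {σ : Stream'.Seq Bool} (hσ : RationalSeq σ) :
    PerIncSeq fun n : ℕ => prodSeq σ n := by
  refine ⟨(prodSeq_mono σ).comp Nat.mono_cast, ?_⟩
  rcases hσ with ⟨l, rfl⟩ | ⟨u, v, hv, rfl⟩
  · refine ⟨l.count false, 1, 0, one_pos, fun n hn => ?_⟩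
    simp only [prodSeq_ofList, prodList_of_count_false_le hn,
      prodList_of_count_false_le (hn.trans n.le_succ), Nat.cast_zero, add_zero]
  obtain hd | hd := (v.count false).eq_zero_or_pos
  · -- a cycle without inputs produces without bound
    have ht : 0 < v.count true := by
      have := List.count_true_add_count_false v
      have := List.length_pos_iff.mpr hv
      omega
    have htop (n : ℕ) (hn : u.count false ≤ n) : prodSeq _ n = ⊤ :=
      ENat.eq_top_of_add_eq_self ht <| by
        simpa [hd] using (prodSeq_ofList_append_cycle_add u v hv hn).symm
    exact ⟨u.count false, 1, 0, one_pos, fun n hn => by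
      simp only [htop n hn, htop (n + 1) (by omega), top_add]⟩
  · exact ⟨u.count false, _, _, hd, fun n hn => prodSeq_ofList_append_cycle_add u v hv hn⟩

lemma PerIncSeq.perInc {f : ℕ∞ → ℕ∞} (hf : NEContinuous f) (hper : PerIncSeq fun n : ℕ => f n) :
    PerInc f := by
  obtain ⟨-, N, p, q, hp, hN⟩ := hper
  refine ⟨hf.1, hf.2, ?_, N, p, q, hp, fun n hn => ?_⟩
  · simpa only [ENat.iSup_natCast] using hf.2 _ Nat.mono_cast
  · simpa only [Nat.cast_add] using hN n hn

lemma min_iInf_iSup_eq {ι : Type*} [Finite ι] (c : ℕ∞) {F : ι → ℕ∞ → ℕ∞}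
    (hF : ∀ i, NEContinuous (F i)) {g : ℕ → ι → ℕ∞} (hg : Monotone g) :
    min c (⨅ i, F i (⨆ n, g n i)) = ⨆ n, min c (⨅ i, F i (g n i)) := by
  have hFg (i : ι) : Monotone fun n => F i (g n i) := (hF i).1.comp fun _ _ h => hg h i
  simp only [fun i => (hF i).2 _ fun _ _ h => hg h i]
  rw [← iSup_iInf_of_monotone hFg]
  exact inf_iSup_eq c _

lemma Function.update_iSup_apply {ι κ β : Type*} [DecidableEq ι] [CompleteLattice β] [Nonempty κ]
    (x : ι → β) (i : ι) (f : κ → β) (j : ι) :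
    Function.update x i (⨆ n, f n) j = ⨆ n, Function.update x i (f n) j := by
  rcases eq_or_ne j i with rfl | hj
  · simp
  · simp [hj]

/-- The production function of a gate (c; σ₁,…,σ_k) is monotone, continuous in
each argument, and periodically increasing along the diagonal when each σᵢ is
rational. -/
theorem gate_production_monotone_continuous (k : ℕ)
    (σ : Fin k → Stream'.Seq Bool) (c : ℕ∞) :
    Monotone (fun ns : Fin k → ℕ∞ => min c (⨅ i, prodSeq (σ i) (ns i))) ∧
    (∀ (i : Fin k) (x : Fin k → ℕ∞) (ch : ℕ → ℕ∞), Monotone ch →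
      min c (⨅ j, prodSeq (σ j) (Function.update x i (⨆ n, ch n) j)) =
        ⨆ n, min c (⨅ j, prodSeq (σ j) (Function.update x i (ch n) j))) ∧
    ((∀ i, RationalSeq (σ i)) →
      PerInc (fun n : ℕ∞ => min c (⨅ i, prodSeq (σ i) n))) := by
  have hcont (j : Fin k) := neContinuous_prodSeq (σ j)
  refine ⟨fun x y hxy => min_le_min_left c (iInf_mono fun i => prodSeq_mono _ (hxy i)),
    fun i x ch hch => ?_, fun hσ => ?_⟩
  · simp only [Function.update_iSup_apply]
    exact min_iInf_iSup_eq c hcont (Function.update_mono.comp hch)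
  · have hdiag : NEContinuous fun n : ℕ∞ => min c (⨅ i, prodSeq (σ i) n) :=
      ⟨fun x y hxy => min_le_min_left c (iInf_mono fun i => prodSeq_mono _ hxy),
        fun ch hch => min_iInf_iSup_eq c hcont (g := fun n _ => ch n) fun _ _ h _ => hch h⟩
    exact PerIncSeq.perInc hdiag
      ((PerIncSeq.const c).min (PerIncSeq.iInf fun i => perIncSeq_prodSeq (hσ i)))
end

section
/- A monotone function f : ℕ∞ → ℕ∞ is the production function ⟦σ⟧ of some io-sequence σ if and only if f is continuous (f(∞) = sup_{n∈ℕ} f(n)) — equivalently, the io-sequence production functions are exactly the monotone ω-continuous functions ℕ∞ → ℕ∞. Moreover, σ can be chosen canonically (shortest in each prefix) and is then unique. -/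
open scoped Classical

/-!
On a finite budget `m`, `⟦σ⟧ m` is the largest number of outputs of a prefix of `σ` that consumes
at most `m` inputs; hence `⟦σ⟧ ∞ = ⨆ m, ⟦σ⟧ m`, which is the necessity of continuity.

Conversely, run the greedy machine from the state `(inputs, outputs) = (0, 0)`: emit `+` while
`outputs < f inputs`, otherwise `-` while `outputs < f ∞`, otherwise stop. It keeps the invariant
`outputs ≤ f inputs`, and before its output reaches `x ≤ f m` it cannot consume more than `m`
inputs, so it computes `f`. Every `τ` computing `f` obeys the same invariant on each prefix, and
this lets the greedy sequence dominate `τ` prefix by prefix: at least as many outputs, at most as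
many inputs. Two sequences dominating each other have the same letter counts on every prefix,
hence are equal.
-/

open Stream'.Seq

namespace Stream'.Seq

variable {α : Type*}

theorem take_succ (s : Seq α) (j : ℕ) : s.take (j + 1) = s.take j ++ (s.get? j).toList := by
  induction j generalizing s with
  | zero => cases s using recOn <;> simp
  | succ j ih =>
    cases s using recOn with
    | nil => simp
    | cons x s => rw [take_succ_cons, ih, take_succ_cons, get?_cons_succ, List.cons_append]

theorem take_take (s : Seq α) (j k : ℕ) : (s.take k).take j = s.take (min j k) := by
  refine List.ext_getElem? fun n => ?_
  simp only [List.getElem?_take, getElem?_take]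
  split_ifs <;> first | rfl | omega

theorem take_eq_take_of_get?_eq_none {s : Seq α} {j k : ℕ} (h : s.get? j = none) (hjk : j ≤ k) :
    s.take k = s.take j := by
  refine List.ext_getElem? fun n => ?_
  simp only [getElem?_take]
  split_ifs with h₁ h₂ h₂
  · rfl
  · exact s.le_stable (not_lt.1 h₂) h
  · omega
  · rfl

theorem count_take_mono [BEq α] (s : Seq α) (a : α) : Monotone fun j => (s.take j).count a := by
  intro j k hjk
  dsimp only
  rw [← min_eq_left hjk, ← take_take]
  exact (List.take_prefix _ _).count_le a

end Stream'.Seq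

namespace IOSeq

theorem prodList_mono : ∀ l : List Bool, Monotone (prodList l)
  | [] => fun _ _ _ => le_rfl
  | true :: l => fun _ _ h => by simpa [prodList] using prodList_mono l h
  | false :: l => by
    rintro (_ | m) (_ | m') h
    · rfl
    · simp [prodList]
    · omega
    · simpa [prodList] using prodList_mono l (Nat.succ_le_succ_iff.1 h)

theorem prodList_count_false : ∀ l : List Bool, prodList l (l.count false) = l.count true
  | [] => rfl
  | true :: l => by simp [prodList, prodList_count_false l, Nat.add_comm]
  | false :: l => by simp [prodList, prodList_count_false l]

theorem exists_prodList_eq_count_true_take :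
    ∀ (l : List Bool) (m : ℕ),
      ∃ j, (l.take j).count false ≤ m ∧ prodList l m = (l.take j).count true
  | [], _ => ⟨0, by simp, rfl⟩
  | true :: l, m => by
    obtain ⟨j, hj, he⟩ := exists_prodList_eq_count_true_take l m
    exact ⟨j + 1, by simpa using hj, by simp [prodList, he, Nat.add_comm]⟩
  | false :: _, 0 => ⟨0, by simp, rfl⟩
  | false :: l, m + 1 => by
    obtain ⟨j, hj, he⟩ := exists_prodList_eq_count_true_take l m
    exact ⟨j + 1, by simpa using hj, by simp [prodList, he]⟩

theorem prodSeq_natCast (σ : Stream'.Seq Bool) (m : ℕ) :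
    prodSeq σ m = ⨆ (j : ℕ) (_ : (σ.take j).count false ≤ m), ((σ.take j).count true : ℕ∞) := by
  apply le_antisymm
  · refine iSup_le fun k => iSup_le fun m' => iSup_le fun hm' => ?_
    obtain ⟨j, hj, he⟩ := exists_prodList_eq_count_true_take (σ.take k) m'
    rw [he, take_take] at *
    exact le_iSup₂_of_le (min j k) (hj.trans (Nat.cast_le.1 hm')) le_rfl
  · refine iSup₂_le fun j hj => ?_
    rw [← prodList_count_false]
    exact le_iSup_of_le j <| le_iSup_of_le m <| le_iSup_of_le le_rfl <|
      Nat.cast_le.2 (prodList_mono _ hj)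

theorem prodSeq_top (σ : Stream'.Seq Bool) : prodSeq σ ⊤ = ⨆ m : ℕ, prodSeq σ m := by
  apply le_antisymm
  · exact iSup_le fun k => iSup_le fun m => iSup_le fun _ =>
      le_iSup_of_le m <| le_iSup_of_le k <| le_iSup_of_le m <| le_iSup_of_le le_rfl le_rfl
  · exact iSup_le fun m => iSup_mono fun k => iSup_mono fun m' =>
      iSup_mono' fun _ => ⟨le_top, le_rfl⟩

theorem apply_top_eq_iSup_of_prodSeq_eq {f : ℕ∞ → ℕ∞} {σ : Stream'.Seq Bool}
    (hσ : ∀ n, prodSeq σ n = f n) : f ⊤ = ⨆ n : ℕ, f n := by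
  simp only [← hσ, prodSeq_top]

theorem count_true_take_le_prodSeq (σ : Stream'.Seq Bool) (j : ℕ) :
    ((σ.take j).count true : ℕ∞) ≤ prodSeq σ ((σ.take j).count false : ℕ) := by
  rw [prodSeq_natCast]
  exact le_iSup₂_of_le j le_rfl le_rfl

theorem prodSeq_top_le_count_true_take {σ : Stream'.Seq Bool} {j : ℕ} (h : σ.get? j = none) :
    prodSeq σ ⊤ ≤ (σ.take j).count true := by
  rw [prodSeq_top]
  refine iSup_le fun m => ?_
  rw [prodSeq_natCast]
  refine iSup₂_le fun k _ => Nat.cast_le.2 ?_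
  rw [← take_eq_take_of_get?_eq_none h (le_max_right k j)]
  exact count_take_mono σ true (le_max_left k j)

/-- The effect of reading one letter (`none` past the end) on `(inputs, outputs)`. -/
def advance (p : ℕ × ℕ) : Option Bool → ℕ × ℕ
  | some true => (p.1, p.2 + 1)
  | some false => (p.1 + 1, p.2)
  | none => p

theorem advance_injective (p : ℕ × ℕ) : Function.Injective (advance p) := by
  rintro (_ | _ | _) (_ | _ | _) h <;> simp_all [advance, Prod.ext_iff]

def ioCount (l : List Bool) : ℕ × ℕ := (l.count false, l.count true)

theorem ioCount_take_succ (s : Stream'.Seq Bool) (j : ℕ) :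
    ioCount (s.take (j + 1)) = advance (ioCount (s.take j)) (s.get? j) := by
  rw [take_succ]
  rcases s.get? j with _ | _ | _ <;> simp [ioCount, advance]

theorem ioCount_take_fst_add_snd {s : Stream'.Seq Bool} {j : ℕ} (h : s.get? j ≠ none) :
    (ioCount (s.take j)).1 + (ioCount (s.take j)).2 = j := by
  induction j with
  | zero => simp [ioCount]
  | succ j ih =>
    have hj : s.get? j ≠ none := fun h' => h (s.le_stable j.le_succ h')
    rw [ioCount_take_succ]
    obtain ⟨b, hb⟩ := Option.ne_none_iff_exists'.1 hj
    have := ih hj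
    rw [hb]
    cases b <;> simp only [advance] <;> omega

theorem eq_of_ioCount_take_eq {s t : Stream'.Seq Bool}
    (h : ∀ j, ioCount (s.take j) = ioCount (t.take j)) : s = t :=
  Stream'.Seq.ext fun j => advance_injective (ioCount (s.take j)) <| by
    rw [← ioCount_take_succ, h (j + 1), ioCount_take_succ, ← h j]

section Canonical

variable (f : ℕ∞ → ℕ∞)

noncomputable def canonBit (p : ℕ × ℕ) : Option Bool :=
  if (p.2 : ℕ∞) < f p.1 then some true else if (p.2 : ℕ∞) < f ⊤ then some false else none

noncomputable def canonState : ℕ → ℕ × ℕ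
  | 0 => (0, 0)
  | j + 1 => advance (canonState j) (canonBit f (canonState j))

noncomputable def canonSeq : Stream'.Seq Bool :=
  ⟨fun j => canonBit f (canonState f j), fun {j} h => by simp only [canonState, h]; exact h⟩

theorem ioCount_take_canonSeq (j : ℕ) : ioCount ((canonSeq f).take j) = canonState f j := by
  induction j with
  | zero => rfl
  | succ j ih => rw [ioCount_take_succ, ih]; rfl

variable {f}

theorem canonState_snd_le (hmono : Monotone f) (j : ℕ) :
    ((canonState f j).2 : ℕ∞) ≤ f (canonState f j).1 := by
  induction j with
  | zero => simp [canonState]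
  | succ j ih =>
    simp only [canonState, canonBit]
    split_ifs with h₁
    · exact_mod_cast Order.add_one_le_of_lt h₁
    · exact ih.trans (hmono (Nat.cast_le.2 (Nat.le_succ _)))
    · exact ih

/-- Before the output reaches `x`, every step is productive and keeps the inputs within `m`, so
after `x + m + 1` steps the output has reached `x`. -/
theorem exists_canonState_of_le (hmono : Monotone f) {x m : ℕ} (hx : (x : ℕ∞) ≤ f m) (n : ℕ) :
    ∃ j, (canonState f j).1 ≤ m ∧
      (x ≤ (canonState f j).2 ∨ n ≤ (canonState f j).1 + (canonState f j).2) := by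
  induction n with
  | zero => exact ⟨0, by simp [canonState]⟩
  | succ n ih =>
    obtain ⟨j, hm, hj⟩ := ih
    by_cases hxo : x ≤ (canonState f j).2
    · exact ⟨j, hm, Or.inl hxo⟩
    have hn := hj.resolve_left hxo
    have hlt : ((canonState f j).2 : ℕ∞) < f m :=
      lt_of_lt_of_le (by exact_mod_cast not_le.1 hxo) hx
    refine ⟨j + 1, ?_⟩
    simp only [canonState, canonBit]
    split_ifs with h₁ h₂
    · exact ⟨hm, Or.inr (by simp only [advance]; omega)⟩
    · have : (canonState f j).1 < m := lt_of_not_ge fun hle =>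
        h₁ (hlt.trans_le (hmono (Nat.cast_le.2 hle)))
      exact ⟨this, Or.inr (by simp only [advance]; omega)⟩
    · exact absurd (hlt.trans_le (hmono le_top)) h₂

theorem canonSeq_computes (hmono : Monotone f) (hcont : f ⊤ = ⨆ n : ℕ, f n) (n : ℕ∞) :
    prodSeq (canonSeq f) n = f n := by
  have hin (j : ℕ) : ((canonSeq f).take j).count false = (canonState f j).1 :=
    congrArg Prod.fst (ioCount_take_canonSeq f j)
  have hout (j : ℕ) : ((canonSeq f).take j).count true = (canonState f j).2 :=
    congrArg Prod.snd (ioCount_take_canonSeq f j)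
  have hfin (m : ℕ) : prodSeq (canonSeq f) m = f m := by
    rw [prodSeq_natCast]
    apply le_antisymm
    · refine iSup₂_le fun j hj => ?_
      rw [hin] at hj
      rw [hout]
      exact (canonState_snd_le hmono j).trans (hmono (Nat.cast_le.2 hj))
    · refine ENat.forall_natCast_le_iff_le.1 fun x hx => ?_
      obtain ⟨j, hm, hj⟩ := exists_canonState_of_le hmono hx (x + m + 1)
      refine le_iSup₂_of_le j ((hin j).trans_le hm) ?_
      rw [hout]
      exact Nat.cast_le.2 (hj.elim id fun h => by omega)
  induction n using ENat.recTopCoe with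
  | top => simp only [prodSeq_top, hfin, hcont]
  | coe m => exact hfin m

theorem advance_canonBit_dominates (hmono : Monotone f) {p q : ℕ × ℕ} {b : Option Bool}
    (hout : q.2 ≤ p.2) (hin : p.1 ≤ q.1)
    (htrue : b = some true → ((q.2 + 1 : ℕ) : ℕ∞) ≤ f q.1) (hnone : b = none → f ⊤ ≤ q.2)
    (hlen : b ≠ none → canonBit f p ≠ none → p.1 + p.2 = q.1 + q.2) :
    (advance q b).2 ≤ (advance p (canonBit f p)).2 ∧
      (advance p (canonBit f p)).1 ≤ (advance q b).1 := by
  obtain ⟨i, o⟩ := p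
  obtain ⟨i', o'⟩ := q
  simp only [canonBit] at hout hin htrue hnone hlen ⊢
  split_ifs at hlen ⊢ with h₁ h₂
  · rcases b with _ | _ | _ <;> simp only [advance] <;> omega
  · rcases b with _ | _ | _
    · exact absurd (hnone rfl) (not_le.2 ((Nat.cast_le.2 hout).trans_lt h₂))
    · simp only [advance]; omega
    · have hlen := hlen (by simp) (by simp)
      -- equal inputs and equal lengths force equal outputs, and then `τ`'s `+` exceeds `f i ≤ o`
      have hne : i ≠ i' := by
        rintro rfl
        have := (htrue rfl).trans (not_lt.1 h₁)
        norm_cast at this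
        omega
      simp only [advance]; omega
  · rcases b with _ | _ | _
    · simp only [advance]; omega
    · simp only [advance]; omega
    · have := (htrue rfl).trans ((hmono le_top).trans (not_lt.1 h₂))
      exact ⟨Nat.cast_le.1 this, hin⟩

theorem canonSeq_dominates (hmono : Monotone f) {τ : Stream'.Seq Bool}
    (hτ : ∀ n, prodSeq τ n = f n) (j : ℕ) :
    (τ.take j).count true ≤ ((canonSeq f).take j).count true ∧
      ((canonSeq f).take j).count false ≤ (τ.take j).count false := by
  change (ioCount (τ.take j)).2 ≤ (ioCount _).2 ∧ (ioCount _).1 ≤ (ioCount (τ.take j)).1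
  rw [ioCount_take_canonSeq]
  induction j with
  | zero => simp [ioCount, canonState]
  | succ j ih =>
    rw [ioCount_take_succ]
    refine advance_canonBit_dominates hmono ih.1 ih.2 (fun hb => ?_) (fun hb => ?_)
      (fun hb hc => ?_)
    · have := count_true_take_le_prodSeq τ (j + 1)
      change ((ioCount (τ.take (j + 1))).2 : ℕ∞) ≤ prodSeq τ ((ioCount (τ.take (j + 1))).1 : ℕ)
        at this
      rw [ioCount_take_succ, hb, hτ] at this
      exact this
    · rw [← hτ]
      exact prodSeq_top_le_count_true_take hb
    · rw [ioCount_take_fst_add_snd hb, ← ioCount_take_canonSeq,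
        ioCount_take_fst_add_snd (s := canonSeq f) hc]

end Canonical

end IOSeq

open IOSeq in
/-- A monotone f : ℕ∞ → ℕ∞ is the production function of an io-sequence iff it
is ω-continuous (f(∞) = sup of the finite values); moreover the io-sequence
can be chosen canonically (producing as early as possible, i.e. with maximal
output count in every prefix) and is then unique. -/
theorem prod_functions_are_continuous_functions (f : ℕ∞ → ℕ∞)
    (hmono : Monotone f) :
    ((∃ σ : Stream'.Seq Bool, ∀ n : ℕ∞, prodSeq σ n = f n) ↔
      f ⊤ = ⨆ n : ℕ, f n) ∧
    (f ⊤ = (⨆ n : ℕ, f n) →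
      ∃! σ : Stream'.Seq Bool,
        (∀ n : ℕ∞, prodSeq σ n = f n) ∧
        ∀ τ : Stream'.Seq Bool, (∀ n : ℕ∞, prodSeq τ n = f n) →
          ∀ j : ℕ,
            (Stream'.Seq.take j τ).count true ≤ (Stream'.Seq.take j σ).count true ∧
            (Stream'.Seq.take j σ).count false ≤ (Stream'.Seq.take j τ).count false) := by
  refine ⟨⟨fun ⟨σ, hσ⟩ => apply_top_eq_iSup_of_prodSeq_eq hσ,
    fun hcont => ⟨canonSeq f, canonSeq_computes hmono hcont⟩⟩, fun hcont => ?_⟩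
  refine ⟨canonSeq f, ⟨canonSeq_computes hmono hcont, fun τ hτ => canonSeq_dominates hmono hτ⟩, ?_⟩
  rintro σ ⟨hσ, hdom⟩
  refine eq_of_ioCount_take_eq fun j => ?_
  obtain ⟨hout, hin⟩ := canonSeq_dominates hmono hσ j
  obtain ⟨hout', hin'⟩ := hdom (canonSeq f) (canonSeq_computes hmono hcont) j
  exact Prod.ext (le_antisymm hin' hin) (le_antisymm hout hout')
end
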